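/- Let f(z) = ∑_{m≥1} (c_m/m) z^m be a formal power series over ℚ (or ℂ) with c_m the number of chains of m composable morphisms in a finite category I, and ζ_I(z) = exp(f(z)). Then the logarithmic derivative satisfies ζ_I'(z)/ζ_I(z) = sum(adj(E - A·z)·A)/det(E - A·z) as formal power series, where A is the adjacency matrix of I. -/

import Mathlib

open Polynomial Matrix PowerSeries

/-- The sum of all the entries of a matrix. -/
def sumEntries {R : Type*} [AddCommMonoid R] {N : ℕ} (M : Matrix (Fin N) (Fin N) R) : R :=
  ∑ i, ∑ j, M i j

/-- `det(E - A·z)`. -/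
noncomputable def detIsubAz {N : ℕ} (A : Matrix (Fin N) (Fin N) ℚ) : ℚ[X] :=
  ((1 : Matrix (Fin N) (Fin N) ℚ[X]) - (X : ℚ[X]) • A.map Polynomial.C).det

/-- `sum(adj(E - A·z)·A)`. -/
noncomputable def sumAdjIsubAzA {N : ℕ} (A : Matrix (Fin N) (Fin N) ℚ) : ℚ[X] :=
  sumEntries (adjugate ((1 : Matrix (Fin N) (Fin N) ℚ[X]) - (X : ℚ[X]) • A.map Polynomial.C) * A.map Polynomial.C)

/-!
Over power series, `E - A·z` has the matrix geometric series `G = ∑ Aᵐ zᵐ` as inverse, so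
`adj(E - A·z) = det(E - A·z) • G`. Termwise differentiation gives
`f' = ∑ c_{m+1} zᵐ = sum(G·A)`, hence `f' · det(E - A·z) = sum(adj(E - A·z)·A)`;
and `ζ'/ζ = f'` since `ζ' = f'·ζ` with `ζ` invertible.
-/

namespace Matrix

variable {ι R : Type*} [DecidableEq ι]

theorem map_coe_one_sub_X_smul [CommRing R] (A : Matrix ι ι R) :
    (1 - (Polynomial.X : R[X]) • A.map Polynomial.C).map Polynomial.coeToPowerSeries.ringHom =
      1 - (PowerSeries.X : R⟦X⟧) • A.map PowerSeries.C := by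
  ext i j : 1
  simp [one_apply, apply_ite, PowerSeries.X_mul]

variable [Fintype ι]

theorem adjugate_eq_det_smul_of_mul_eq_one [CommRing R] {B G : Matrix ι ι R} (h : G * B = 1) :
    adjugate B = B.det • G := by
  calc adjugate B = G * B * adjugate B := by rw [h, one_mul]
    _ = B.det • G := by rw [mul_assoc, mul_adjugate, mul_smul_comm, mul_one]

noncomputable def geomPowerSeries [Semiring R] (A : Matrix ι ι R) : Matrix ι ι R⟦X⟧ :=
  of fun i j => PowerSeries.mk fun m => (A ^ m) i j

theorem geomPowerSeries_mul_map_C [Semiring R] (A : Matrix ι ι R) :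
    geomPowerSeries A * A.map PowerSeries.C =
      of fun i j => PowerSeries.mk fun m => (A ^ (m + 1)) i j := by
  ext i j n
  simp [geomPowerSeries, mul_apply, pow_succ, map_sum, PowerSeries.coeff_mul_C]

theorem geomPowerSeries_mul_one_sub_X_smul [CommRing R] (A : Matrix ι ι R) :
    geomPowerSeries A * (1 - (PowerSeries.X : R⟦X⟧) • A.map PowerSeries.C) = 1 := by
  rw [mul_sub, mul_one, mul_smul_comm, geomPowerSeries_mul_map_C]
  ext i j (_ | n) <;> by_cases hij : i = j <;>
    simp [geomPowerSeries, one_apply, PowerSeries.coeff_one, hij]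

theorem adjugate_one_sub_X_smul [CommRing R] (A : Matrix ι ι R) :
    adjugate (1 - (PowerSeries.X : R⟦X⟧) • A.map PowerSeries.C) =
      (1 - (PowerSeries.X : R⟦X⟧) • A.map PowerSeries.C).det • geomPowerSeries A :=
  adjugate_eq_det_smul_of_mul_eq_one (geomPowerSeries_mul_one_sub_X_smul A)

theorem coe_charpolyRev [CommRing R] (A : Matrix ι ι R) :
    (A.charpolyRev : R⟦X⟧) = (1 - (PowerSeries.X : R⟦X⟧) • A.map PowerSeries.C).det := by
  rw [← Polynomial.coeToPowerSeries.ringHom_apply, charpolyRev, RingHom.map_det,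
    RingHom.mapMatrix_apply, map_coe_one_sub_X_smul]

theorem constantCoeff_coe_charpolyRev [CommRing R] (A : Matrix ι ι R) :
    constantCoeff (A.charpolyRev : R⟦X⟧) = 1 := by
  rw [Polynomial.constantCoeff_coe, Polynomial.coeff_zero_eq_eval_zero, eval_charpolyRev]

end Matrix

namespace PowerSeries

variable {k : Type*} [Field k]

theorem derivative_mul_inv_of_derivative_eq {ζ g : k⟦X⟧} (hζ0 : constantCoeff ζ ≠ 0)
    (hζ : d⁄dX k ζ = g * ζ) : d⁄dX k ζ * ζ⁻¹ = g := by
  rw [hζ, mul_assoc, PowerSeries.mul_inv_cancel ζ hζ0, mul_one]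

theorem derivative_mk_div [CharZero k] (c : ℕ → k) :
    d⁄dX k (PowerSeries.mk fun m => if m = 0 then 0 else c m / m) =
      PowerSeries.mk fun m => c (m + 1) := by
  ext n
  rw [coeff_derivative]
  simp [field]

end PowerSeries

theorem sumEntries_smul {R : Type*} [Semiring R] {N : ℕ} (r : R) (M : Matrix (Fin N) (Fin N) R) :
    sumEntries (r • M) = r * sumEntries M := by
  simp only [sumEntries, Matrix.smul_apply, smul_eq_mul, Finset.mul_sum]

theorem map_sumEntries {R S F : Type*} [AddCommMonoid R] [AddCommMonoid S] [FunLike F R S]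
    [AddMonoidHomClass F R S] (f : F) {N : ℕ} (M : Matrix (Fin N) (Fin N) R) :
    f (sumEntries M) = sumEntries (M.map f) := by
  simp only [sumEntries, map_sum, map_apply]

theorem sumEntries_geomPowerSeries_mul_map_C {R : Type*} [Semiring R] {N : ℕ}
    (A : Matrix (Fin N) (Fin N) R) :
    sumEntries (A.geomPowerSeries * A.map PowerSeries.C) =
      PowerSeries.mk fun m => sumEntries (A ^ (m + 1)) := by
  ext n
  rw [map_sumEntries, geomPowerSeries_mul_map_C]
  rfl

theorem detIsubAz_eq_charpolyRev {N : ℕ} (A : Matrix (Fin N) (Fin N) ℚ) :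
    detIsubAz A = A.charpolyRev :=
  rfl

theorem coe_sumAdjIsubAzA {N : ℕ} (A : Matrix (Fin N) (Fin N) ℚ) :
    (sumAdjIsubAzA A : ℚ⟦X⟧) =
      A.charpolyRev * sumEntries (A.geomPowerSeries * A.map PowerSeries.C) := by
  rw [← Polynomial.coeToPowerSeries.ringHom_apply, sumAdjIsubAzA, map_sumEntries, Matrix.map_mul,
    ← RingHom.mapMatrix_apply, RingHom.map_adjugate, RingHom.mapMatrix_apply,
    map_coe_one_sub_X_smul, adjugate_one_sub_X_smul, smul_mul_assoc, sumEntries_smul,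
    coe_charpolyRev]
  congr 3
  ext i j : 1
  simp

/-- Let `c_m = sum(A^m)` be the number of chains of `m` composable morphisms in a finite
category with adjacency matrix `A`, and let `f(z) = ∑_{m≥1} (c_m/m) z^m`. If `ζ = exp(f)`
(characterized by `ζ(0) = 1` and `ζ' = f'·ζ`), then
`ζ'/ζ = sum(adj(E - A·z)·A)/det(E - A·z)` as formal power series. -/
theorem stmt17 {N : ℕ} (A : Matrix (Fin N) (Fin N) ℚ)
    (c : ℕ → ℚ) (hc : ∀ m, c m = sumEntries (A ^ m))
    (f : PowerSeries ℚ)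
    (hf : f = PowerSeries.mk fun m => if m = 0 then 0 else c m / m)
    (ζ : PowerSeries ℚ)
    -- `ζ = exp (f)`: the unique series with constant term `1` satisfying `ζ' = f'·ζ`
    (hζ0 : PowerSeries.constantCoeff ζ = 1)
    (hζ : ζ.derivativeFun = f.derivativeFun * ζ) :
    ζ.derivativeFun * ζ⁻¹
      = (sumAdjIsubAzA A : PowerSeries ℚ) * ((detIsubAz A : PowerSeries ℚ))⁻¹ := by
  change d⁄dX ℚ ζ = d⁄dX ℚ f * ζ at hζ
  change d⁄dX ℚ ζ * ζ⁻¹ = _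
  have hf' : d⁄dX ℚ f = sumEntries (A.geomPowerSeries * A.map PowerSeries.C) := by
    simp only [hf, derivative_mk_div, sumEntries_geomPowerSeries_mul_map_C, hc]
  have hdet : constantCoeff (detIsubAz A : ℚ⟦X⟧) ≠ 0 := by
    rw [detIsubAz_eq_charpolyRev, constantCoeff_coe_charpolyRev]
    exact one_ne_zero
  rw [derivative_mul_inv_of_derivative_eq (by simp [hζ0]) hζ,
    PowerSeries.eq_mul_inv_iff_mul_eq hdet, coe_sumAdjIsubAzA, hf', detIsubAz_eq_charpolyRev,
    mul_comm]
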